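/- arXiv:2411.13000 — 2 statements merged into one kernel-verified Lean document; each statement's English description precedes it below -/
import Mathlib

section
/- (Lemma III.1, Contraction) Let d be a positive natural number, p ∈ (0,1), and λ = min(p, 1−p). Let x ∈ ℝ^d be a fixed vector and let φ = (φ_1,…,φ_d) be a random vector whose entries are i.i.d. with P(φ_j = 1) = p and P(φ_j = −1) = 1−p. Define g ∈ ℝ^d entrywise by g_j = max(x_j φ_j, 0). Then E‖x − φ ⊙ g‖² ≤ (1−λ)‖x‖², where the expectation is over the randomness of φ. -/
open MeasureTheory ProbabilityTheory

/-! On the event `φ_j = 1` the `j`-th residual is `x_j - max x_j 0 = min x_j 0`, and on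
`φ_j = -1` it is `x_j + max (-x_j) 0 = max x_j 0`. Hence its expected square is
`p (min x_j 0)² + (1 - p) (max x_j 0)²`, and only one of the two terms is nonzero, so it is
at most `max p (1 - p) x_j² = (1 - λ) x_j²`. Summing over the coordinates gives the
claim. -/

section SignVariable

variable {Ω : Type*} {s : Ω → ℝ}

lemma comp_eq_indicator_add_indicator_of_sign (hval : ∀ ω, s ω = 1 ∨ s ω = -1) (f : ℝ → ℝ) :
    (fun ω => f (s ω)) =
      {ω | s ω = 1}.indicator (fun _ => f 1) + {ω | s ω = -1}.indicator (fun _ => f (-1)) := by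
  funext ω
  rcases hval ω with h | h <;> norm_num [Set.indicator, h]

variable [MeasurableSpace Ω] {μ : Measure Ω}

lemma measurableSet_eq_one_and_neg_one (hs : Measurable s) :
    MeasurableSet {ω | s ω = 1} ∧ MeasurableSet {ω | s ω = -1} :=
  ⟨hs (measurableSet_singleton 1), hs (measurableSet_singleton (-1))⟩

variable [IsFiniteMeasure μ]

lemma integrable_comp_of_sign (hs : Measurable s) (hval : ∀ ω, s ω = 1 ∨ s ω = -1)
    (f : ℝ → ℝ) : Integrable (fun ω => f (s ω)) μ := by
  obtain ⟨h1, h2⟩ := measurableSet_eq_one_and_neg_one hs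
  rw [comp_eq_indicator_add_indicator_of_sign hval]
  exact ((integrable_const _).indicator h1).add ((integrable_const _).indicator h2)

lemma integral_comp_of_sign (hs : Measurable s) (hval : ∀ ω, s ω = 1 ∨ s ω = -1)
    (f : ℝ → ℝ) :
    ∫ ω, f (s ω) ∂μ =
      μ.real {ω | s ω = 1} * f 1 + μ.real {ω | s ω = -1} * f (-1) := by
  obtain ⟨h1, h2⟩ := measurableSet_eq_one_and_neg_one hs
  rw [comp_eq_indicator_add_indicator_of_sign hval,
    integral_add' ((integrable_const _).indicator h1) ((integrable_const _).indicator h2),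
    integral_indicator_const _ h1, integral_indicator_const _ h2, smul_eq_mul, smul_eq_mul]

end SignVariable

lemma mul_sq_sub_max_add_mul_sq_add_max_le (p a : ℝ) :
    p * (a - max a 0) ^ 2 + (1 - p) * (a + max (-a) 0) ^ 2 ≤ (1 - min p (1 - p)) * a ^ 2 := by
  rcases le_or_gt a 0 with ha | ha
  · rw [max_eq_right ha, max_eq_left (neg_nonneg.mpr ha)]
    nlinarith [min_le_right p (1 - p), sq_nonneg a]
  · rw [max_eq_left ha.le, max_eq_right (neg_nonpos.mpr ha.le)]
    nlinarith [min_le_left p (1 - p), sq_nonneg a]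

theorem stmt_0_general {Ω : Type*} [MeasurableSpace Ω] (μ : Measure Ω) [IsProbabilityMeasure μ]
    (d : ℕ) (p : ℝ) (hp : p ∈ Set.Ioo (0 : ℝ) 1)
    (x : Fin d → ℝ) (φ : Fin d → Ω → ℝ)
    (hmeas : ∀ j, Measurable (φ j))
    (hval : ∀ j ω, φ j ω = 1 ∨ φ j ω = -1)
    (hone : ∀ j, μ {ω | φ j ω = 1} = ENNReal.ofReal p)
    (hmone : ∀ j, μ {ω | φ j ω = -1} = ENNReal.ofReal (1 - p)) :
    ∫ ω, ∑ j, (x j - φ j ω * max (x j * φ j ω) 0) ^ 2 ∂μ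
      ≤ (1 - min p (1 - p)) * ∑ j, (x j) ^ 2 := by
  obtain ⟨hp0, hp1⟩ := hp
  have hcoord (j : Fin d) :
      ∫ ω, (x j - φ j ω * max (x j * φ j ω) 0) ^ 2 ∂μ ≤ (1 - min p (1 - p)) * x j ^ 2 := by
    rw [integral_comp_of_sign (hmeas j) (hval j) fun s => (x j - s * max (x j * s) 0) ^ 2,
      measureReal_def, measureReal_def, hone j, hmone j, ENNReal.toReal_ofReal hp0.le,
      ENNReal.toReal_ofReal (sub_nonneg.mpr hp1.le)]
    simpa only [one_mul, mul_one, neg_one_mul, mul_neg, sub_neg_eq_add]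
      using mul_sq_sub_max_add_mul_sq_add_max_le p (x j)
  rw [integral_finsetSum _ fun j _ =>
      integrable_comp_of_sign (hmeas j) (hval j) fun s => (x j - s * max (x j * s) 0) ^ 2,
    Finset.mul_sum]
  exact Finset.sum_le_sum fun j _ => hcoord j

/-- Contraction lemma for binary dithering (Lemma III.1): if the entries of the
dither vector `φ` are i.i.d. with `P(φ_j = 1) = p` and `P(φ_j = -1) = 1 - p`,
`p ∈ (0,1)`, and `g_j = max (x_j * φ_j) 0`, then
`E ‖x - φ ⊙ g‖² ≤ (1 - min p (1-p)) ‖x‖²` (squared Euclidean norms written as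
sums of squares of coordinates). -/
theorem stmt_0 {Ω : Type*} [MeasurableSpace Ω] (μ : Measure Ω) [IsProbabilityMeasure μ]
    (d : ℕ) (hd : 0 < d) (p : ℝ) (hp : p ∈ Set.Ioo (0 : ℝ) 1)
    (x : Fin d → ℝ) (φ : Fin d → Ω → ℝ)
    (hmeas : ∀ j, Measurable (φ j))
    (hval : ∀ j ω, φ j ω = 1 ∨ φ j ω = -1)
    (hone : ∀ j, μ {ω | φ j ω = 1} = ENNReal.ofReal p)
    (hmone : ∀ j, μ {ω | φ j ω = -1} = ENNReal.ofReal (1 - p))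
    (hindep : iIndepFun φ μ) :
    ∫ ω, ∑ j, (x j - φ j ω * max (x j * φ j ω) 0) ^ 2 ∂μ
      ≤ (1 - min p (1 - p)) * ∑ j, (x j) ^ 2 :=
  stmt_0_general μ d p hp x φ hmeas hval hone hmone
end

section
/- (Memory bound) Let (Ω, ℱ, P) be a probability space, d a positive natural number, λ ∈ (0,1], and D ≥ 0. Let (M_t)_{t∈ℕ} and (Δ_t)_{t∈ℕ} be sequences of square-integrable ℝ^d-valued random vectors such that M_0 = 0 almost surely, E‖Δ_t‖² ≤ D² for all t, and E‖M_{t+1}‖² ≤ (1−λ)·E‖M_t + Δ_t‖² for all t. Then for every t ∈ ℕ, E‖M_t‖² ≤ 4(1−λ²)D²/λ². -/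
/-!
Young's inequality `‖m + δ‖² ≤ (1 + λ/2) ‖m‖² + (1 + 2/λ) ‖δ‖²` turns the contraction into the
scalar recursion `e (t+1) ≤ (1 - λ) ((1 + λ/2) e t + (1 + 2/λ) D²)` for `e t = E‖M t‖²`. Since
`(1 - λ) (1 + λ/2) ≤ 1 - λ/2`, the bound `4 (1 - λ²) D² / λ²` is preserved by this recursion, and
it holds at `t = 0` because `e 0 = 0`.
-/

open MeasureTheory

lemma add_sq_le_one_add_mul_sq_add {K : Type*} [Field K] [LinearOrder K] [IsStrictOrderedRing K]
    {ε : K} (hε : 0 < ε) (a b : K) :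
    (a + b) ^ 2 ≤ (1 + ε) * a ^ 2 + (1 + ε⁻¹) * b ^ 2 := by
  have hcross : 0 ≤ ε * a ^ 2 + ε⁻¹ * b ^ 2 - 2 * a * b := by
    have h : ε * a ^ 2 + ε⁻¹ * b ^ 2 - 2 * a * b = ε⁻¹ * (ε * a - b) ^ 2 := by
      field_simp
      ring
    rw [h]
    positivity
  linarith

lemma norm_add_sq_le_one_add_mul_norm_sq_add {E : Type*} [SeminormedAddGroup E]
    {ε : ℝ} (hε : 0 < ε) (x y : E) :
    ‖x + y‖ ^ 2 ≤ (1 + ε) * ‖x‖ ^ 2 + (1 + ε⁻¹) * ‖y‖ ^ 2 :=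
  (pow_le_pow_left₀ (norm_nonneg _) (norm_add_le x y) 2).trans
    (add_sq_le_one_add_mul_sq_add hε _ _)

lemma integral_norm_add_sq_le {Ω E : Type*} [MeasurableSpace Ω] {μ : Measure Ω}
    [NormedAddCommGroup E] {f g : Ω → E} (hf : MemLp f 2 μ) (hg : MemLp g 2 μ)
    {ε : ℝ} (hε : 0 < ε) :
    ∫ ω, ‖f ω + g ω‖ ^ 2 ∂μ
      ≤ (1 + ε) * ∫ ω, ‖f ω‖ ^ 2 ∂μ + (1 + ε⁻¹) * ∫ ω, ‖g ω‖ ^ 2 ∂μ := by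
  have hf2 := hf.norm.integrable_sq.const_mul (1 + ε)
  have hg2 := hg.norm.integrable_sq.const_mul (1 + ε⁻¹)
  rw [← integral_const_mul, ← integral_const_mul, ← integral_add hf2 hg2]
  exact integral_mono (hf.add hg).norm.integrable_sq (hf2.add hg2)
    fun ω ↦ norm_add_sq_le_one_add_mul_norm_sq_add hε (f ω) (g ω)

lemma memory_recursion_le {lam D x y : ℝ} (hlam₀ : 0 < lam) (hlam₁ : lam ≤ 1)
    (hx : x ≤ 4 * (1 - lam ^ 2) * D ^ 2 / lam ^ 2) (hy : y ≤ D ^ 2) :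
    (1 - lam) * ((1 + lam / 2) * x + (1 + (lam / 2)⁻¹) * y)
      ≤ 4 * (1 - lam ^ 2) * D ^ 2 / lam ^ 2 := by
  set B := 4 * (1 - lam ^ 2) * D ^ 2 / lam ^ 2
  have hfix : B - (1 - lam) * ((1 + lam / 2) * B + (1 + (lam / 2)⁻¹) * D ^ 2)
      = (1 - lam) * (2 * lam + 3) * D ^ 2 := by
    simp only [B]
    field_simp
    ring
  have hlam₁' : 0 ≤ 1 - lam := sub_nonneg.2 hlam₁
  calc (1 - lam) * ((1 + lam / 2) * x + (1 + (lam / 2)⁻¹) * y)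
      ≤ (1 - lam) * ((1 + lam / 2) * B + (1 + (lam / 2)⁻¹) * D ^ 2) := by
        gcongr
    _ ≤ B := by
        rw [← sub_nonneg, hfix]
        positivity

theorem stmt_6_general {Ω : Type*} [MeasurableSpace Ω] (μ : Measure Ω)
    (d : ℕ) (lam D : ℝ) (hlam : lam ∈ Set.Ioc (0 : ℝ) 1)
    (M Δ : ℕ → Ω → EuclideanSpace ℝ (Fin d))
    (hmemM : ∀ t, MemLp (M t) 2 μ) (hmemΔ : ∀ t, MemLp (Δ t) 2 μ)
    (hM0 : M 0 =ᵐ[μ] 0)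
    (hΔ : ∀ t, ∫ ω, ‖Δ t ω‖ ^ 2 ∂μ ≤ D ^ 2)
    (hrec : ∀ t, ∫ ω, ‖M (t + 1) ω‖ ^ 2 ∂μ
        ≤ (1 - lam) * ∫ ω, ‖M t ω + Δ t ω‖ ^ 2 ∂μ) :
    ∀ t, ∫ ω, ‖M t ω‖ ^ 2 ∂μ ≤ 4 * (1 - lam ^ 2) * D ^ 2 / lam ^ 2 := by
  obtain ⟨hlam₀, hlam₁⟩ := hlam
  intro t
  induction t with
  | zero =>
    have hM0_sq : (fun ω ↦ ‖M 0 ω‖ ^ 2) =ᵐ[μ] 0 := by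
      filter_upwards [hM0] with ω hω
      simp [hω]
    have hlam_sq : 0 ≤ 1 - lam ^ 2 := sub_nonneg.2 (pow_le_one₀ hlam₀.le hlam₁)
    rw [integral_congr_ae hM0_sq, integral_zero']
    positivity
  | succ t ih =>
    have hlam₁' : 0 ≤ 1 - lam := sub_nonneg.2 hlam₁
    calc ∫ ω, ‖M (t + 1) ω‖ ^ 2 ∂μ
        ≤ (1 - lam) * ∫ ω, ‖M t ω + Δ t ω‖ ^ 2 ∂μ := hrec t
      _ ≤ (1 - lam) * ((1 + lam / 2) * ∫ ω, ‖M t ω‖ ^ 2 ∂μ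
            + (1 + (lam / 2)⁻¹) * ∫ ω, ‖Δ t ω‖ ^ 2 ∂μ) := by
        gcongr
        exact integral_norm_add_sq_le (hmemM t) (hmemΔ t) (by positivity)
      _ ≤ 4 * (1 - lam ^ 2) * D ^ 2 / lam ^ 2 := memory_recursion_le hlam₀ hlam₁ ih (hΔ t)

/-- Memory bound: if `M 0 = 0` a.s., `E‖Δ t‖² ≤ D²` for all `t`, and the
contraction `E‖M (t+1)‖² ≤ (1-λ) E‖M t + Δ t‖²` holds for all `t`, then
`E‖M t‖² ≤ 4 (1-λ²) D² / λ²` for every `t`. -/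
theorem stmt_6 {Ω : Type*} [MeasurableSpace Ω] (μ : Measure Ω) [IsProbabilityMeasure μ]
    (d : ℕ) (hd : 0 < d) (lam D : ℝ) (hlam : lam ∈ Set.Ioc (0 : ℝ) 1) (hD : 0 ≤ D)
    (M Δ : ℕ → Ω → EuclideanSpace ℝ (Fin d))
    (hmemM : ∀ t, MemLp (M t) 2 μ) (hmemΔ : ∀ t, MemLp (Δ t) 2 μ)
    (hM0 : M 0 =ᵐ[μ] 0)
    (hΔ : ∀ t, ∫ ω, ‖Δ t ω‖ ^ 2 ∂μ ≤ D ^ 2)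
    (hrec : ∀ t, ∫ ω, ‖M (t + 1) ω‖ ^ 2 ∂μ
        ≤ (1 - lam) * ∫ ω, ‖M t ω + Δ t ω‖ ^ 2 ∂μ) :
    ∀ t, ∫ ω, ‖M t ω‖ ^ 2 ∂μ ≤ 4 * (1 - lam ^ 2) * D ^ 2 / lam ^ 2 :=
  stmt_6_general μ d lam D hlam M Δ hmemM hmemΔ hM0 hΔ hrec
end
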